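/- arXiv:2005.04722 — 5 statements merged into one kernel-verified Lean document; each statement's English description precedes it below -/
import Mathlib

section
/- For every label ℓ : L, every faceted value f : Fac A, and every continuation c : A → Fac B, projecting the bind of f with c at ℓ equals projecting the continuation applied to the projection of f, i.e. project ℓ (bind f c) = project ℓ (c (project ℓ f)). (Faceted evaluation simulates standard evaluation at each observer level.) -/
/-- Faceted values over labels `L` and payload type `A`. -/
inductive Fac (L : Type*) (A : Type*) where
  | ret : A → Fac L A
  | facet : L → Fac L A → Fac L A → Fac L A

section
variable {L : Type*} [PartialOrder L] [DecidableRel ((· ≤ ·) : L → L → Prop)]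
variable {A B : Type*}

/-- Projection of a faceted value at an observer level. -/
def Fac.project (ℓ : L) : Fac L A → A
  | .ret a => a
  | .facet ℓ' f₀ f₁ => if ℓ' ≤ ℓ then f₀.project ℓ else f₁.project ℓ

/-- Monadic bind for faceted values. -/
def Fac.bind : Fac L A → (A → Fac L B) → Fac L B
  | .ret a, c => c a
  | .facet ℓ' f₀ f₁, c => .facet ℓ' (f₀.bind c) (f₁.bind c)

/-- Faceted evaluation simulates standard evaluation at each observer level. -/
theorem project_bind (ℓ : L) (f : Fac L A) (c : A → Fac L B) :
    (f.bind c).project ℓ = (c (f.project ℓ)).project ℓ := by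
  induction f with
  | ret a => rfl
  | facet ℓ' f₀ f₁ ih₀ ih₁ =>
    simp only [Fac.bind, Fac.project]
    split <;> simp [ih₀, ih₁]

end
end

section
/- The LIO bind operation respects the logical relation: for relations Aᵣ : A₀ → A₁ → Prop and Bᵣ : B₀ → B₁ → Prop, computations m₀ : LIO A₀, m₁ : LIO A₁ with LIOᵣ Aᵣ m₀ m₁, and continuations k₀ : A₀ → LIO B₀, k₁ : A₁ → LIO B₁ such that for all a₀, a₁ with Aᵣ a₀ a₁ one has LIOᵣ Bᵣ (k₀ a₀) (k₁ a₁), it holds that LIOᵣ Bᵣ (bind m₀ k₀) (bind m₁ k₁). -/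
section
variable {L : Type*} [SemilatticeSup L] [DecidableRel ((· ≤ ·) : L → L → Prop)]
variable {E : Type*}

/-- A labeled value: a result-or-delayed-exception together with its label. -/
abbrev Labeled (L E A : Type*) : Type _ := (A ⊕ E) × L

/-- The label of a labeled value. -/
def Labeled.labelOf {A : Type*} (lv : Labeled L E A) : L := lv.2

/-- An LIO computation: a state-passing function on the current label,
returning a result-or-exception and a final label that can only increase. -/
abbrev LIO (L E : Type*) [SemilatticeSup L] (A : Type*) : Type _ :=
  (ℓc : L) → { r : (A ⊕ E) × L // ℓc ≤ r.2 }

/-- Label equivalence at observer level `ℓstar`. -/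
def LabelEquiv (ℓstar ℓ₀ ℓ₁ : L) : Prop :=
  (ℓ₀ ≤ ℓstar ∨ ℓ₁ ≤ ℓstar) → ℓ₀ = ℓ₁

/-- Relational lifting of a relation to sums with exceptions. -/
inductive SumRel {A₀ A₁ : Type*} (Ar : A₀ → A₁ → Prop) :
    (A₀ ⊕ E) → (A₁ ⊕ E) → Prop where
  | inl {a₀ a₁} : Ar a₀ a₁ → SumRel Ar (Sum.inl a₀) (Sum.inl a₁)
  | inr {e₀ e₁} : e₀ = e₁ → SumRel Ar (Sum.inr e₀) (Sum.inr e₁)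

/-- The logical relation on labeled values. -/
def LabeledRel {A₀ A₁ : Type*} (ℓstar : L) (Ar : A₀ → A₁ → Prop)
    (lv₀ : Labeled L E A₀) (lv₁ : Labeled L E A₁) : Prop :=
  lv₀.labelOf = lv₁.labelOf ∧ (lv₀.labelOf ≤ ℓstar → SumRel Ar lv₀.1 lv₁.1)

/-- The logical relation on final configurations. -/
def CfgRel {A₀ A₁ : Type*} (ℓstar : L) (Ar : A₀ → A₁ → Prop)
    (c₀ : (A₀ ⊕ E) × L) (c₁ : (A₁ ⊕ E) × L) : Prop :=
  LabelEquiv ℓstar c₀.2 c₁.2 ∧ (c₀.2 ≤ ℓstar → c₁.2 ≤ ℓstar → SumRel Ar c₀.1 c₁.1)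

/-- The logical relation on LIO computations. -/
def LIORel {A₀ A₁ : Type*} (ℓstar : L) (Ar : A₀ → A₁ → Prop)
    (m₀ : LIO L E A₀) (m₁ : LIO L E A₁) : Prop :=
  ∀ ℓ₀ ℓ₁ : L, LabelEquiv ℓstar ℓ₀ ℓ₁ → CfgRel ℓstar Ar (m₀ ℓ₀).val (m₁ ℓ₁).val

/-- The LIO return operation. -/
def LIO.ret {A : Type*} (a : A) : LIO L E A :=
  fun ℓc => ⟨(Sum.inl a, ℓc), le_refl ℓc⟩

/-- The LIO bind operation. -/
def LIO.bind {A B : Type*} (m : LIO L E A) (k : A → LIO L E B) : LIO L E B :=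
  fun ℓc =>
    match m ℓc with
    | ⟨(Sum.inl a, ℓ'), p⟩ => ⟨(k a ℓ').val, le_trans p (k a ℓ').property⟩
    | ⟨(Sum.inr e, ℓ'), p⟩ => ⟨(Sum.inr e, ℓ'), p⟩

/-- The LIO label operation. -/
def LIO.label {A : Type*} (ℓ : L) (a : A) : Labeled L E A := (Sum.inl a, ℓ)

/-- The LIO unlabel operation: raises the current label by the label of `lv`;
a delayed exception stored in `lv` is re-thrown. -/
def LIO.unlabel {A : Type*} (lv : Labeled L E A) : LIO L E A :=
  fun ℓc => ⟨(lv.1, ℓc ⊔ lv.2), le_sup_left⟩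

/-- The LIO catch operation. -/
def LIO.catch {A : Type*} (m : LIO L E A) (h : E → LIO L E A) : LIO L E A :=
  fun ℓc =>
    match m ℓc with
    | ⟨(Sum.inl a, ℓ'), p⟩ => ⟨(Sum.inl a, ℓ'), p⟩
    | ⟨(Sum.inr e, ℓ'), p⟩ => ⟨(h e ℓ').val, le_trans p (h e ℓ').property⟩

/-- The LIO toLabeled operation: on success the result (possibly a delayed
exception) is labeled `ℓ`; on label-check failure a delayed IFC exception
labeled `ℓ` is returned; in both cases the current label is restored. -/
def LIO.toLabeled {A : Type*} (ifcErr : L → E) (ℓ : L) (m : LIO L E A) :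
    LIO L E (Labeled L E A) :=
  fun ℓc =>
    if (m ℓc).val.2 ≤ ℓ then
      ⟨(Sum.inl ((m ℓc).val.1, ℓ), ℓc), le_refl ℓc⟩
    else
      ⟨(Sum.inl (Sum.inr (ifcErr ℓ), ℓ), ℓc), le_refl ℓc⟩

/-- The LIO bind operation respects the logical relation. -/
theorem bind_rel {A₀ A₁ B₀ B₁ : Type*} (ℓstar : L)
    (Ar : A₀ → A₁ → Prop) (Br : B₀ → B₁ → Prop)
    (m₀ : LIO L E A₀) (m₁ : LIO L E A₁) (hm : LIORel ℓstar Ar m₀ m₁)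
    (k₀ : A₀ → LIO L E B₀) (k₁ : A₁ → LIO L E B₁)
    (hk : ∀ a₀ a₁, Ar a₀ a₁ → LIORel ℓstar Br (k₀ a₀) (k₁ a₁)) :
    LIORel ℓstar Br (m₀.bind k₀) (m₁.bind k₁) := by
  intro ℓ₀ ℓ₁ h
  obtain ⟨heq, hsum⟩ := hm ℓ₀ ℓ₁ h
  unfold LIO.bind
  rcases hM : m₀ ℓ₀ with ⟨⟨r₀, l₀⟩, p₀⟩
  rcases hN : m₁ ℓ₁ with ⟨⟨r₁, l₁⟩, p₁⟩
  rw [hM, hN] at heq hsum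
  simp only at heq hsum
  -- helper: if not both intermediate labels ≤ ℓstar, then neither is
  have hnone : ¬ (l₀ ≤ ℓstar ∧ l₁ ≤ ℓstar) → ¬ l₀ ≤ ℓstar ∧ ¬ l₁ ≤ ℓstar := by
    intro hnb
    constructor <;> intro hle
    · exact hnb ⟨hle, (heq (Or.inl hle)) ▸ hle⟩
    · exact hnb ⟨(heq (Or.inr hle)) ▸ hle, hle⟩
  rcases r₀ with a₀ | e₀ <;> rcases r₁ with a₁ | e₁
  · -- both inl
    by_cases hboth : l₀ ≤ ℓstar ∧ l₁ ≤ ℓstar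
    · obtain ⟨h₀, h₁⟩ := hboth
      have hAr : Ar a₀ a₁ := by
        cases hsum h₀ h₁ with
        | inl hr => exact hr
      have := hk a₀ a₁ hAr l₀ l₁ (fun _ => heq (Or.inl h₀))
      exact this
    · obtain ⟨hn₀, hn₁⟩ := hnone hboth
      constructor
      · intro hor
        rcases hor with hle | hle
        · exact absurd (le_trans (k₀ a₀ l₀).property hle) hn₀
        · exact absurd (le_trans (k₁ a₁ l₁).property hle) hn₁
      · intro hle _
        exact absurd (le_trans (k₀ a₀ l₀).property hle) hn₀
  · -- inl / inr : impossible when both observable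
    have hnb : ¬ (l₀ ≤ ℓstar ∧ l₁ ≤ ℓstar) := by
      rintro ⟨h₀, h₁⟩; cases hsum h₀ h₁
    obtain ⟨hn₀, hn₁⟩ := hnone hnb
    constructor
    · intro hor
      rcases hor with hle | hle
      · exact absurd (le_trans (k₀ a₀ l₀).property hle) hn₀
      · exact absurd hle hn₁
    · intro hle _
      exact absurd (le_trans (k₀ a₀ l₀).property hle) hn₀
  · have hnb : ¬ (l₀ ≤ ℓstar ∧ l₁ ≤ ℓstar) := by
      rintro ⟨h₀, h₁⟩; cases hsum h₀ h₁
    obtain ⟨hn₀, hn₁⟩ := hnone hnb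
    constructor
    · intro hor
      rcases hor with hle | hle
      · exact absurd hle hn₀
      · exact absurd (le_trans (k₁ a₁ l₁).property hle) hn₁
    · intro hle _
      exact absurd hle hn₀
  · -- both inr
    refine ⟨heq, fun h₀ h₁ => ?_⟩
    cases hsum h₀ h₁ with
    | inr he => exact SumRel.inr he

end
end

section
/- The LIO unlabel operation respects the logical relation: for any relation Aᵣ : A₀ → A₁ → Prop and labeled values lv₀ : Labeled A₀, lv₁ : Labeled A₁ with Labeledᵣ Aᵣ lv₀ lv₁, one has LIOᵣ Aᵣ (unlabel lv₀) (unlabel lv₁), where unlabel lv := fun ℓc => ⟨(lv.1, ℓc ⊔ lv.2), le_sup_left⟩ (the current label is raised by the label of lv, and a delayed exception stored in lv is re-thrown). -/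
section
variable {L : Type*} [SemilatticeSup L] [DecidableRel ((· ≤ ·) : L → L → Prop)]
variable {E : Type*}

/-- The LIO unlabel operation respects the logical relation. -/
theorem unlabel_rel {A₀ A₁ : Type*} (ℓstar : L) (Ar : A₀ → A₁ → Prop)
    (lv₀ : Labeled L E A₀) (lv₁ : Labeled L E A₁)
    (hlv : LabeledRel ℓstar Ar lv₀ lv₁) :
    LIORel ℓstar Ar (LIO.unlabel lv₀) (LIO.unlabel lv₁) := by
  obtain ⟨hlab, hval⟩ := hlv
  intro ℓ₀ ℓ₁ heq
  constructor
  · intro h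
    have h' : ℓ₀ = ℓ₁ := heq (h.imp (fun hh => le_trans le_sup_left hh)
      (fun hh => le_trans le_sup_left hh))
    have h2 : lv₀.2 = lv₁.2 := hlab
    simp [LIO.unlabel, h', h2]
  · intro h₀ _
    exact hval (le_trans le_sup_right h₀)

end
end

section
/- The LIO catch operation respects the logical relation: for a relation Aᵣ : A₀ → A₁ → Prop, computations m₀ : LIO A₀, m₁ : LIO A₁ with LIOᵣ Aᵣ m₀ m₁, and exception handlers h₀ : E → LIO A₀, h₁ : E → LIO A₁ such that for all e : E one has LIOᵣ Aᵣ (h₀ e) (h₁ e), it holds that LIOᵣ Aᵣ (catch m₀ h₀) (catch m₁ h₁). -/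
section
variable {L : Type*} [SemilatticeSup L] [DecidableRel ((· ≤ ·) : L → L → Prop)]
variable {E : Type*}

/-- The LIO catch operation respects the logical relation. -/
theorem catch_rel {A₀ A₁ : Type*} (ℓstar : L) (Ar : A₀ → A₁ → Prop)
    (m₀ : LIO L E A₀) (m₁ : LIO L E A₁) (hm : LIORel ℓstar Ar m₀ m₁)
    (h₀ : E → LIO L E A₀) (h₁ : E → LIO L E A₁)
    (hh : ∀ e : E, LIORel ℓstar Ar (h₀ e) (h₁ e)) :
    LIORel ℓstar Ar (m₀.catch h₀) (m₁.catch h₁) := by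
  intro ℓ₀ ℓ₁ hℓ
  obtain ⟨heq, hsum⟩ := hm ℓ₀ ℓ₁ hℓ
  unfold LIO.catch
  rcases hc₀ : m₀ ℓ₀ with ⟨⟨r₀, ℓ'₀⟩, p₀⟩
  rcases hc₁ : m₁ ℓ₁ with ⟨⟨r₁, ℓ'₁⟩, p₁⟩
  rw [hc₀, hc₁] at heq hsum
  simp only at heq hsum ⊢
  rcases r₀ with a₀ | e₀ <;> rcases r₁ with a₁ | e₁
  · exact ⟨heq, hsum⟩
  · -- inl / inr : labels not observable
    have hnot : ¬ (ℓ'₀ ≤ ℓstar ∨ ℓ'₁ ≤ ℓstar) := by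
      intro h
      have := heq h
      subst this
      rcases h with h | h <;> cases hsum h h
    push_neg at hnot
    refine ⟨fun h => ?_, fun h h' => ?_⟩
    · rcases h with h | h
      · exact absurd h hnot.1
      · exact absurd (le_trans (h₁ e₁ ℓ'₁).property h) hnot.2
    · exact absurd h hnot.1
  · have hnot : ¬ (ℓ'₀ ≤ ℓstar ∨ ℓ'₁ ≤ ℓstar) := by
      intro h
      have := heq h
      subst this
      rcases h with h | h <;> cases hsum h h
    push_neg at hnot
    refine ⟨fun h => ?_, fun h h' => ?_⟩
    · rcases h with h | h
      · exact absurd (le_trans (h₀ e₀ ℓ'₀).property h) hnot.1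
      · exact absurd h hnot.2
    · exact absurd (le_trans (h₀ e₀ ℓ'₀).property h) hnot.1
  · -- both inr
    by_cases hobs : ℓ'₀ ≤ ℓstar ∨ ℓ'₁ ≤ ℓstar
    · have heq' := heq hobs
      subst heq'
      have hboth : ℓ'₀ ≤ ℓstar := by rcases hobs with h | h <;> exact h
      have he : e₀ = e₁ := by cases hsum hboth hboth with | inr h => exact h
      subst he
      exact hh e₀ ℓ'₀ ℓ'₀ (fun _ => rfl)
    · push_neg at hobs
      refine ⟨fun h => ?_, fun h h' => ?_⟩
      · rcases h with h | h
        · exact absurd (le_trans (h₀ e₀ ℓ'₀).property h) hobs.1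
        · exact absurd (le_trans (h₁ e₁ ℓ'₁).property h) hobs.2
      · exact absurd (le_trans (h₀ e₀ ℓ'₀).property h) hobs.1

end
end

section
/- The LIO toLabeled operation respects the logical relation: for a relation Aᵣ : A₀ → A₁ → Prop, any label ℓ : L, and computations m₀ : LIO A₀, m₁ : LIO A₁ with LIOᵣ Aᵣ m₀ m₁, it holds that LIOᵣ (Labeledᵣ Aᵣ) (toLabeled ℓ m₀) (toLabeled ℓ m₁). -/
section
variable {L : Type*} [SemilatticeSup L] [DecidableRel ((· ≤ ·) : L → L → Prop)]
variable {E : Type*}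

/-- The LIO toLabeled operation respects the logical relation. -/
theorem toLabeled_rel {A₀ A₁ : Type*} (ℓstar : L) (ifcErr : L → E)
    (Ar : A₀ → A₁ → Prop) (ℓ : L)
    (m₀ : LIO L E A₀) (m₁ : LIO L E A₁) (hm : LIORel ℓstar Ar m₀ m₁) :
    LIORel ℓstar (LabeledRel ℓstar Ar)
      (LIO.toLabeled ifcErr ℓ m₀) (LIO.toLabeled ifcErr ℓ m₁) := by
  intro ℓ₀ ℓ₁ heq
  obtain ⟨hceq, hcrel⟩ := hm ℓ₀ ℓ₁ heq
  unfold LIO.toLabeled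
  split <;> split
  · refine ⟨heq, fun h0 h1 => SumRel.inl ⟨rfl, fun hl => ?_⟩⟩
    exact hcrel (le_trans (by assumption) hl) (le_trans (by assumption) hl)
  · refine ⟨heq, fun h0 h1 => SumRel.inl ⟨rfl, fun hl => ?_⟩⟩
    exact absurd (hceq (Or.inl (le_trans (by assumption) hl)) ▸ (by assumption : (m₀ ℓ₀).val.2 ≤ ℓ)) (by assumption)
  · refine ⟨heq, fun h0 h1 => SumRel.inl ⟨rfl, fun hl => ?_⟩⟩
    exact absurd ((hceq (Or.inr (le_trans (by assumption) hl))).symm ▸ (by assumption : (m₁ ℓ₁).val.2 ≤ ℓ)) (by assumption)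
  · exact ⟨heq, fun h0 h1 => SumRel.inl ⟨rfl, fun hl => SumRel.inr rfl⟩⟩


end
end
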